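/- Assume: (a) for every x ∈ H and every λ ∈ A(r⁻,r⁺) the series Σ_{n≥1}(P_E Tⁿ x)λ^{-n} + Σ_{n≥0}(P_E T'*ⁿ x)λⁿ converges in E; (b) for every x ∈ H and every λ ∈ A(r'⁻,r'⁺) the series Σ_{n≥1}(P_E T'ⁿ x)λ^{-n} + Σ_{n≥0}(P_E T*ⁿ x)λⁿ converges in E; (c) r⁻ < 1 and r'⁻ ≤ 1 ≤ r'⁺. Let x ∈ H satisfy limsup_{n→∞} ‖P_E T'*ⁿ x‖^{1/n} = 0. Then the relevant series converge absolutely and the following two conditions are equivalent: (1) Σ_{n≥1} T'*ⁿ P_E Tⁿ x + Σ_{n≥0} Tⁿ P_E T'*ⁿ x = x; (2) for every y ∈ H: ⟨x, y⟩ = Σ_{n≥1} ⟨P_E Tⁿ x, P_E T'ⁿ y⟩ + Σ_{n≥0} ⟨P_E T'*ⁿ x, P_E T*ⁿ y⟩ (the Cauchy pairing of the Laurent coefficients of x with those of y). -/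

import Mathlib

open ContinuousLinearMap

/-- Orthogonal projection onto the closed subspace `E`, as an operator `H →L[ℂ] H`. -/
noncomputable def PE {H : Type*} [NormedAddCommGroup H] [InnerProductSpace ℂ H]
    (E : Submodule ℂ H) [CompleteSpace E] : H →L[ℂ] H :=
  E.subtypeL.comp E.orthogonalProjectionOnto

/-- The open annulus A(a,b) = {z ∈ ℂ : a < |z| < b}. -/
def annulus (a b : ℝ) : Set ℂ := {z : ℂ | a < ‖z‖ ∧ ‖z‖ < b}

/-!
Summability of the principal part in (a) at a radius `ρ ∈ (r⁻, 1)` gives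
`‖P_E Tⁿ⁺¹ x‖ = O(ρⁿ)`, and summability of the principal part in (b) at a radius
`ρ' ∈ (r'⁻, ρ⁻¹)` gives, by the uniform boundedness principle, `‖T'*ⁿ⁺¹ P_E‖ = ‖P_E T'ⁿ⁺¹‖ = O(ρ'ⁿ)`;
as `ρ ρ' < 1`, the first series converges absolutely. The hypothesis on `x` makes `‖P_E T'*ⁿ x‖`
decay faster than every geometric sequence, which beats `‖Tⁿ‖ ≤ ‖T‖ⁿ`. Pairing both series with `y`
and moving `T'*ⁿ⁺¹`, `Tⁿ` and `P_E` to the other side produces the Cauchy pairing, so (1) ⇔ (2)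
says that a vector is determined by its inner products.
-/

open Filter

section GeometricBounds

variable {𝕜 V W : Type*}

lemma norm_le_mul_pow_of_norm_zpow_smul_le [NormedField 𝕜] [SeminormedAddCommGroup V]
    [NormedSpace 𝕜 V] {c : 𝕜} (hc : c ≠ 0) {v : V} {B : ℝ} (n : ℕ)
    (h : ‖c ^ (-(n + 1 : ℤ)) • v‖ ≤ B) : ‖v‖ ≤ ‖c‖ * B * ‖c‖ ^ n := by
  have hv : v = c ^ (n + 1) • c ^ (-(n + 1 : ℤ)) • v := by
    rw [smul_smul, zpow_neg, ← zpow_natCast, Nat.cast_succ, mul_inv_cancel₀ (zpow_ne_zero _ hc),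
      one_smul]
  calc ‖v‖ = ‖c‖ ^ (n + 1) * ‖c ^ (-(n + 1 : ℤ)) • v‖ := by
        rw [← norm_pow, ← norm_smul, ← hv]
    _ ≤ ‖c‖ ^ (n + 1) * B := by gcongr
    _ = ‖c‖ * B * ‖c‖ ^ n := by ring

lemma exists_norm_le_mul_pow_of_summable_zpow_smul [NormedField 𝕜] [SeminormedAddCommGroup V]
    [NormedSpace 𝕜 V] {c : 𝕜} (hc : c ≠ 0) {v : ℕ → V}
    (h : Summable fun n : ℕ => c ^ (-(n + 1 : ℤ)) • v n) :
    ∃ C, ∀ n, ‖v n‖ ≤ C * ‖c‖ ^ n := by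
  obtain ⟨B, hB⟩ := h.tendsto_atTop_zero.norm.bddAbove_range
  exact ⟨‖c‖ * B, fun n => norm_le_mul_pow_of_norm_zpow_smul_le hc n (hB ⟨n, rfl⟩)⟩

lemma exists_opNorm_le_mul_pow_of_summable_zpow_smul [NontriviallyNormedField 𝕜]
    [NormedAddCommGroup V] [NormedSpace 𝕜 V] [CompleteSpace V] [NormedAddCommGroup W]
    [NormedSpace 𝕜 W] {c : 𝕜} (hc : c ≠ 0) {A : ℕ → V →L[𝕜] W}
    (h : ∀ y, Summable fun n : ℕ => c ^ (-(n + 1 : ℤ)) • A n y) :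
    ∃ C, ∀ n, ‖A n‖ ≤ C * ‖c‖ ^ n := by
  obtain ⟨B, hB⟩ := banach_steinhaus (g := fun n : ℕ => c ^ (-(n + 1 : ℤ)) • A n) fun y => by
    obtain ⟨C, hC⟩ := (h y).tendsto_atTop_zero.norm.bddAbove_range
    exact ⟨C, fun n => hC ⟨n, rfl⟩⟩
  exact ⟨‖c‖ * B, fun n => norm_le_mul_pow_of_norm_zpow_smul_le hc n (hB n)⟩

lemma summable_norm_apply_of_le_mul_pow [NontriviallyNormedField 𝕜] [SeminormedAddCommGroup V]
    [NormedSpace 𝕜 V] [SeminormedAddCommGroup W] [NormedSpace 𝕜 W] {B : ℕ → V →L[𝕜] W}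
    {v : ℕ → V} {C D r s : ℝ} (hB : ∀ n, ‖B n‖ ≤ C * r ^ n) (hv : ∀ n, ‖v n‖ ≤ D * s ^ n)
    (hr : 0 ≤ r) (hs : 0 ≤ s) (hrs : r * s < 1) :
    Summable fun n => ‖B n (v n)‖ := by
  refine .of_nonneg_of_le (fun n => norm_nonneg _) (fun n => ?_)
    ((summable_geometric_of_lt_one (mul_nonneg hr hs) hrs).mul_left (C * D))
  calc ‖B n (v n)‖ ≤ ‖B n‖ * ‖v n‖ := (B n).le_opNorm (v n)
    _ ≤ C * r ^ n * (D * s ^ n) :=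
        mul_le_mul (hB n) (hv n) (norm_nonneg _) ((norm_nonneg _).trans (hB n))
    _ = C * D * (r * s) ^ n := by ring

lemma eventually_norm_apply_pow_apply_le [NontriviallyNormedField 𝕜] [SeminormedAddCommGroup V]
    [NormedSpace 𝕜 V] [SeminormedAddCommGroup W] [NormedSpace 𝕜 W] (B : V →L[𝕜] W)
    (A : V →L[𝕜] V) (x : V) : ∀ᶠ n in atTop, ‖B ((A ^ n) x)‖ ≤ ‖B‖ * ‖x‖ * ‖A‖ ^ n := by
  filter_upwards [eventually_ne_atTop 0] with n hn
  calc ‖B ((A ^ n) x)‖ ≤ ‖B‖ * (‖A ^ n‖ * ‖x‖) := B.le_opNorm_of_le ((A ^ n).le_opNorm x)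
    _ ≤ ‖B‖ * (‖A‖ ^ n * ‖x‖) := by gcongr; exact norm_pow_le' A (Nat.pos_of_ne_zero hn)
    _ = ‖B‖ * ‖x‖ * ‖A‖ ^ n := by ring

end GeometricBounds

section RootDecay

lemma isBoundedUnder_rpow_inv_of_le_mul_pow {a : ℕ → ℝ} {C L : ℝ} (ha : ∀ n, 0 ≤ a n)
    (hL : 0 ≤ L) (h : ∀ᶠ n in atTop, a n ≤ C * L ^ n) :
    IsBoundedUnder (· ≤ ·) atTop fun n : ℕ => a n ^ (1 / (n : ℝ)) := by
  set K := max 1 C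
  refine isBoundedUnder_of_eventually_le (a := K * L) ?_
  filter_upwards [h, eventually_ne_atTop 0] with n hCL hn
  have hK : 0 ≤ K := zero_le_one.trans (le_max_left _ _)
  have hle : a n ≤ (K * L) ^ n := calc
    a n ≤ C * L ^ n := hCL
    _ ≤ K ^ n * L ^ n := by
        gcongr
        exact (le_max_right _ _).trans (le_self_pow₀ (le_max_left _ _) hn)
    _ = (K * L) ^ n := (mul_pow _ _ _).symm
  calc a n ^ (1 / (n : ℝ)) ≤ ((K * L) ^ n) ^ (1 / (n : ℝ)) := by gcongr; exact ha n
    _ = K * L := by rw [one_div, Real.pow_rpow_inv_natCast (by positivity) hn]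

/-- `hbdd` is indispensable: the `limsup` of a real sequence that is not bounded above is the junk
value `0`. -/
lemma eventually_le_pow_of_limsup_rpow_inv_eq_zero {a : ℕ → ℝ} (ha : ∀ n, 0 ≤ a n)
    (hbdd : IsBoundedUnder (· ≤ ·) atTop fun n : ℕ => a n ^ (1 / (n : ℝ)))
    (hlim : limsup (fun n : ℕ => a n ^ (1 / (n : ℝ))) atTop = 0) {ε : ℝ} (hε : 0 < ε) :
    ∀ᶠ n in atTop, a n ≤ ε ^ n := by
  filter_upwards [eventually_lt_of_limsup_lt (hlim ▸ hε) hbdd, eventually_ne_atTop 0]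
    with n hlt hn
  calc a n = (a n ^ (1 / (n : ℝ))) ^ n := by
        rw [one_div, Real.rpow_inv_natCast_pow (ha n) hn]
    _ ≤ ε ^ n := pow_le_pow_left₀ (Real.rpow_nonneg (ha n) _) hlt.le n

lemma eventually_norm_apply_pow_apply_le_pow {𝕜 V W : Type*} [NontriviallyNormedField 𝕜]
    [SeminormedAddCommGroup V] [NormedSpace 𝕜 V] [SeminormedAddCommGroup W] [NormedSpace 𝕜 W]
    (B : V →L[𝕜] W) (A : V →L[𝕜] V) (x : V)
    (h : limsup (fun n : ℕ => ‖B ((A ^ n) x)‖ ^ (1 / (n : ℝ))) atTop = 0) {ε : ℝ} (hε : 0 < ε) :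
    ∀ᶠ n in atTop, ‖B ((A ^ n) x)‖ ≤ ε ^ n :=
  eventually_le_pow_of_limsup_rpow_inv_eq_zero (fun _ => norm_nonneg _)
    (isBoundedUnder_rpow_inv_of_le_mul_pow (fun _ => norm_nonneg _) (norm_nonneg _)
      (eventually_norm_apply_pow_apply_le B A x)) h hε

lemma summable_norm_pow_apply_of_eventually_le_pow {𝕜 V : Type*} [NontriviallyNormedField 𝕜]
    [SeminormedAddCommGroup V] [NormedSpace 𝕜 V] (A : V →L[𝕜] V) {v : ℕ → V}
    (hv : ∀ ε > 0, ∀ᶠ n in atTop, ‖v n‖ ≤ ε ^ n) :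
    Summable fun n => ‖(A ^ n) (v n)‖ := by
  set ε := (2 * (‖A‖ + 1))⁻¹
  have hAε : ‖A‖ * ε ≤ 1 / 2 := by
    rw [← div_eq_mul_inv, div_le_iff₀ (by positivity)]
    linarith
  refine .of_norm_bounded_eventually summable_geometric_two ?_
  rw [Nat.cofinite_eq_atTop]
  filter_upwards [hv ε (by positivity), eventually_ne_atTop 0] with n hn hn0
  rw [norm_norm]
  calc ‖(A ^ n) (v n)‖ ≤ ‖A ^ n‖ * ‖v n‖ := (A ^ n).le_opNorm (v n)
    _ ≤ ‖A‖ ^ n * ε ^ n := by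
        gcongr
        exact norm_pow_le' A (Nat.pos_of_ne_zero hn0)
    _ = (‖A‖ * ε) ^ n := (mul_pow _ _ _).symm
    _ ≤ (1 / 2) ^ n := by gcongr

end RootDecay

section Projection

variable {H : Type*} [NormedAddCommGroup H] [InnerProductSpace ℂ H] [CompleteSpace H]
  (E : Submodule ℂ H) [CompleteSpace E]

omit [CompleteSpace H] in
lemma PE_PE (u : H) : PE E (PE E u) = PE E u :=
  E.starProjection_eq_self_iff.mpr (E.starProjection_apply_mem u)

lemma adjoint_pow (A : H →L[ℂ] H) (m : ℕ) : adjoint (A ^ m) = adjoint A ^ m := by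
  rw [← star_eq_adjoint, star_pow, star_eq_adjoint]

lemma inner_pow_PE (A : H →L[ℂ] H) (m : ℕ) (y u : H) :
    inner ℂ y ((A ^ m) (PE E u)) = inner ℂ (PE E ((adjoint A ^ m) y)) (PE E u) := by
  rw [← adjoint_inner_left, adjoint_pow]
  calc inner ℂ ((adjoint A ^ m) y) (PE E u) = inner ℂ ((adjoint A ^ m) y) (PE E (PE E u)) := by
        rw [PE_PE]
    _ = inner ℂ (PE E ((adjoint A ^ m) y)) (PE E u) :=
        (E.inner_starProjection_left_eq_right _ _).symm

lemma adjoint_PE_comp_pow_apply_PE (A : H →L[ℂ] H) (m : ℕ) (u : H) :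
    adjoint (PE E ∘L A ^ m) (PE E u) = (adjoint A ^ m) (PE E u) := by
  rw [adjoint_comp, adjoint_pow, show adjoint (PE E) = PE E from
    (isSelfAdjoint_starProjection E).adjoint_eq, comp_apply, PE_PE]

omit [CompleteSpace H] in
lemma tsum_add_tsum_eq_iff_forall_inner {f g : ℕ → H} (hf : Summable f) (hg : Summable g) (x : H) :
    ∑' n, f n + ∑' n, g n = x ↔
      ∀ y, inner ℂ y x = ∑' n, inner ℂ y (f n) + ∑' n, inner ℂ y (g n) := by
  have inner_tsum : ∀ {u : ℕ → H}, Summable u →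
      ∀ y, inner ℂ y (∑' n, u n) = ∑' n, inner ℂ y (u n) :=
    fun hu y => (innerSL ℂ y).map_tsum hu
  simp only [← inner_tsum hf, ← inner_tsum hg, ← inner_add_right]
  exact ⟨fun h y => by rw [h], fun h => ext_inner_left ℂ fun y => (h y).symm⟩

end Projection

lemma exists_mem_annulus_mul_lt_one {rm rp rm' rp' : ℝ} (hrm : 0 ≤ rm) (hr : rm < rp)
    (hrm' : 0 ≤ rm') (hr' : rm' < rp') (hc1 : rm < 1) (hc2 : rm' ≤ 1) :
    ∃ ρ ρ' : ℝ, 0 < ρ ∧ 0 < ρ' ∧ (ρ : ℂ) ∈ annulus rm rp ∧ (ρ' : ℂ) ∈ annulus rm' rp' ∧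
      ρ' * ρ < 1 := by
  obtain ⟨ρ, hρ, hρ1⟩ := exists_between (lt_min hr hc1)
  have hρ0 : 0 < ρ := hrm.trans_lt hρ
  have hinv : rm' < ρ⁻¹ := hc2.trans_lt ((one_lt_inv₀ hρ0).mpr (hρ1.trans_le (min_le_right _ _)))
  obtain ⟨ρ', hρ', hρ'1⟩ := exists_between (lt_min hr' hinv)
  have hρ'0 : 0 < ρ' := hrm'.trans_lt hρ'
  refine ⟨ρ, ρ', hρ0, hρ'0, ?_, ?_, ?_⟩
  · show rm < ‖(ρ : ℂ)‖ ∧ ‖(ρ : ℂ)‖ < rp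
    rw [Complex.norm_of_nonneg hρ0.le]
    exact ⟨hρ, hρ1.trans_le (min_le_left _ _)⟩
  · show rm' < ‖(ρ' : ℂ)‖ ∧ ‖(ρ' : ℂ)‖ < rp'
    rw [Complex.norm_of_nonneg hρ'0.le]
    exact ⟨hρ', hρ'1.trans_le (min_le_left _ _)⟩
  · calc ρ' * ρ < ρ⁻¹ * ρ := by gcongr; exact hρ'1.trans_le (min_le_right _ _)
      _ = 1 := inv_mul_cancel₀ hρ0.ne'

/- The paper's pairing `⟨a, b⟩`, linear in `a`, is `inner ℂ b a`. -/
theorem stmt_14_general {H : Type*} [NormedAddCommGroup H] [InnerProductSpace ℂ H] [CompleteSpace H]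
    (T T' : H →L[ℂ] H)
    (E : Submodule ℂ H) [CompleteSpace E]
    (rm rp rm' rp' : ℝ) (hrm : 0 ≤ rm) (hr : rm < rp) (hrm' : 0 ≤ rm') (hr' : rm' < rp')
    (ha : ∀ x : H, ∀ lam ∈ annulus rm rp,
      Summable (fun n : ℕ => (lam ^ (-(n + 1 : ℤ))) • PE E ((T ^ (n + 1)) x)) ∧
      Summable (fun n : ℕ =>
        (lam ^ n) • PE E (((ContinuousLinearMap.adjoint T') ^ n) x)))
    (hb : ∀ x : H, ∀ lam ∈ annulus rm' rp',
      Summable (fun n : ℕ => (lam ^ (-(n + 1 : ℤ))) • PE E ((T' ^ (n + 1)) x)) ∧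
      Summable (fun n : ℕ =>
        (lam ^ n) • PE E (((ContinuousLinearMap.adjoint T) ^ n) x)))
    (hc1 : rm < 1) (hc2 : rm' ≤ 1)
    (x : H)
    (hx : Filter.limsup
      (fun n : ℕ => ‖PE E (((ContinuousLinearMap.adjoint T') ^ n) x)‖ ^ (1 / (n : ℝ)))
      Filter.atTop = 0) :
    Summable (fun n : ℕ =>
      ‖((ContinuousLinearMap.adjoint T') ^ (n + 1)) (PE E ((T ^ (n + 1)) x))‖) ∧
    Summable (fun n : ℕ =>
      ‖(T ^ n) (PE E (((ContinuousLinearMap.adjoint T') ^ n) x))‖) ∧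
    (∀ y : H,
      Summable (fun n : ℕ =>
        (inner ℂ (PE E ((T' ^ (n + 1)) y)) (PE E ((T ^ (n + 1)) x)) : ℂ)) ∧
      Summable (fun n : ℕ =>
        (inner ℂ (PE E (((ContinuousLinearMap.adjoint T) ^ n) y))
          (PE E (((ContinuousLinearMap.adjoint T') ^ n) x)) : ℂ))) ∧
    (((∑' n : ℕ, ((ContinuousLinearMap.adjoint T') ^ (n + 1)) (PE E ((T ^ (n + 1)) x))) +
        ∑' n : ℕ, (T ^ n) (PE E (((ContinuousLinearMap.adjoint T') ^ n) x)) = x) ↔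
      (∀ y : H,
        (inner ℂ y x : ℂ) =
          (∑' n : ℕ, (inner ℂ (PE E ((T' ^ (n + 1)) y)) (PE E ((T ^ (n + 1)) x)) : ℂ)) +
            ∑' n : ℕ, (inner ℂ (PE E (((ContinuousLinearMap.adjoint T) ^ n) y))
              (PE E (((ContinuousLinearMap.adjoint T') ^ n) x)) : ℂ))) := by
  obtain ⟨ρ, ρ', hρ, hρ', hmem, hmem', hρρ'⟩ :=
    exists_mem_annulus_mul_lt_one hrm hr hrm' hr' hc1 hc2
  obtain ⟨D, hD⟩ := exists_norm_le_mul_pow_of_summable_zpow_smul (by exact_mod_cast hρ.ne')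
    (ha x _ hmem).1
  obtain ⟨C, hC⟩ := exists_opNorm_le_mul_pow_of_summable_zpow_smul
    (A := fun n => PE E ∘L T' ^ (n + 1)) (by exact_mod_cast hρ'.ne') fun y => (hb y _ hmem').1
  rw [Complex.norm_of_nonneg hρ.le] at hD
  rw [Complex.norm_of_nonneg hρ'.le] at hC
  have hF := summable_norm_apply_of_le_mul_pow (B := fun n => adjoint (PE E ∘L T' ^ (n + 1)))
    (fun n => (adjoint.norm_map _).trans_le (hC n)) hD hρ'.le hρ.le hρρ'
  simp only [adjoint_PE_comp_pow_apply_PE] at hF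
  have hG := summable_norm_pow_apply_of_eventually_le_pow T fun ε hε =>
    eventually_norm_apply_pow_apply_le_pow (PE E) (adjoint T') x hx hε
  refine ⟨hF, hG, fun y => ⟨?_, ?_⟩, ?_⟩
  · simpa only [innerSL_apply_apply, inner_pow_PE, adjoint_adjoint]
      using hF.of_norm.mapL (innerSL ℂ y)
  · simpa only [innerSL_apply_apply, inner_pow_PE] using hG.of_norm.mapL (innerSL ℂ y)
  · simpa only [inner_pow_PE, adjoint_adjoint]
      using tsum_add_tsum_eq_iff_forall_inner hF.of_norm hG.of_norm x

theorem stmt_14 {H : Type*} [NormedAddCommGroup H] [InnerProductSpace ℂ H] [CompleteSpace H]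
    (T T' W : H →L[ℂ] H)
    (hleft : ∃ S : H →L[ℂ] H, S.comp T = ContinuousLinearMap.id ℂ H)
    (hW1 : W.comp ((ContinuousLinearMap.adjoint T).comp T) = ContinuousLinearMap.id ℂ H)
    (hW2 : ((ContinuousLinearMap.adjoint T).comp T).comp W = ContinuousLinearMap.id ℂ H)
    (hT' : T' = T.comp W)
    (E : Submodule ℂ H) [CompleteSpace E]
    (rm rp rm' rp' : ℝ) (hrm : 0 ≤ rm) (hr : rm < rp) (hrm' : 0 ≤ rm') (hr' : rm' < rp')
    (ha : ∀ x : H, ∀ lam ∈ annulus rm rp,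
      Summable (fun n : ℕ => (lam ^ (-(n + 1 : ℤ))) • PE E ((T ^ (n + 1)) x)) ∧
      Summable (fun n : ℕ =>
        (lam ^ n) • PE E (((ContinuousLinearMap.adjoint T') ^ n) x)))
    (hb : ∀ x : H, ∀ lam ∈ annulus rm' rp',
      Summable (fun n : ℕ => (lam ^ (-(n + 1 : ℤ))) • PE E ((T' ^ (n + 1)) x)) ∧
      Summable (fun n : ℕ =>
        (lam ^ n) • PE E (((ContinuousLinearMap.adjoint T) ^ n) x)))
    (hc1 : rm < 1) (hc2 : rm' ≤ 1) (hc3 : 1 ≤ rp')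
    (x : H)
    (hx : Filter.limsup
      (fun n : ℕ => ‖PE E (((ContinuousLinearMap.adjoint T') ^ n) x)‖ ^ (1 / (n : ℝ)))
      Filter.atTop = 0) :
    Summable (fun n : ℕ =>
      ‖((ContinuousLinearMap.adjoint T') ^ (n + 1)) (PE E ((T ^ (n + 1)) x))‖) ∧
    Summable (fun n : ℕ =>
      ‖(T ^ n) (PE E (((ContinuousLinearMap.adjoint T') ^ n) x))‖) ∧
    (∀ y : H,
      Summable (fun n : ℕ =>
        (inner ℂ (PE E ((T' ^ (n + 1)) y)) (PE E ((T ^ (n + 1)) x)) : ℂ)) ∧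
      Summable (fun n : ℕ =>
        (inner ℂ (PE E (((ContinuousLinearMap.adjoint T) ^ n) y))
          (PE E (((ContinuousLinearMap.adjoint T') ^ n) x)) : ℂ))) ∧
    (((∑' n : ℕ, ((ContinuousLinearMap.adjoint T') ^ (n + 1)) (PE E ((T ^ (n + 1)) x))) +
        ∑' n : ℕ, (T ^ n) (PE E (((ContinuousLinearMap.adjoint T') ^ n) x)) = x) ↔
      (∀ y : H,
        (inner ℂ y x : ℂ) =
          (∑' n : ℕ, (inner ℂ (PE E ((T' ^ (n + 1)) y)) (PE E ((T ^ (n + 1)) x)) : ℂ)) +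
            ∑' n : ℕ, (inner ℂ (PE E (((ContinuousLinearMap.adjoint T) ^ n) y))
              (PE E (((ContinuousLinearMap.adjoint T') ^ n) x)) : ℂ))) :=
  stmt_14_general T T' E rm rp rm' rp' hrm hr hrm' hr' ha hb hc1 hc2 x hx
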